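/- For the leaky door gadget, any legal traversal sequence from the closed state in which every traversal either enters at the entrance or is the opening self-loop satisfies: the number of entrance→exit traversals is at most the number of opening self-loop traversals, and each entrance→exit traversal is preceded by strictly more opening self-loops than earlier entrance-involving exits. -/
import Mathlib


/-- A gadget: states `Q`, locations `L`, and a transition relation
`T q a r b` meaning the agent may enter at `a` in state `q` and exit at `b`,
leaving the gadget in state `r`. -/
structure Gadget (Q L : Type) where
  T : Q → L → Q → L → Prop

namespace Gadget

variable {Q L : Type}

/-- `G.LegalEnd q X r`: the traversal sequence `X` (a list of (entrance, exit)
pairs) is legal from state `q`, ending in state `r`. -/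
inductive LegalEnd (G : Gadget Q L) : Q → List (L × L) → Q → Prop
  | nil (q : Q) : LegalEnd G q [] q
  | cons {q q' r : Q} {a b : L} {X : List (L × L)} :
      G.T q a q' b → LegalEnd G q' X r → LegalEnd G q ((a, b) :: X) r

/-- `X` is legal from state `q` if it is legal ending in some state. -/
def Legal (G : Gadget Q L) (q : Q) (X : List (L × L)) : Prop :=
  ∃ r, G.LegalEnd q X r

/-- A state is broken w.r.t. a checking sequence `C` if `C` is not legal from it. -/
def Broken (G : Gadget Q L) (C : List (L × L)) (q : Q) : Prop :=
  ¬ G.Legal q C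

/-- The postselected gadget: locations restricted to `L'`, states restricted to
nonbroken states, transitions restricted accordingly. -/
def PostSelect (G : Gadget Q L) (C : List (L × L)) (L' : Set L) : Gadget Q L where
  T q a r b := G.T q a r b ∧ a ∈ L' ∧ b ∈ L' ∧ ¬ G.Broken C q ∧ ¬ G.Broken C r

/-- Restriction of a gadget to a subset of its locations. -/
def restrict (G : Gadget Q L) (L' : Set L) : Gadget Q L where
  T q a r b := G.T q a r b ∧ a ∈ L' ∧ b ∈ L'

/-- The transitive closure of a gadget. -/
def transClosure (G : Gadget Q L) : Gadget Q L where
  T q a r b :=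
    Relation.TransGen (fun p p' : Q × L => G.T p.1 p.2 p'.1 p'.2) (q, a) (r, b)

end Gadget

/-- The leaky door.  States: `true = open`, `false = closed`.
Locations: `0 = opening`, `1 = entrance`, `2 = exit`. -/
def LeakyDoor : Gadget Bool (Fin 3) where
  T q a r b :=
    (q = false ∧ a = 0 ∧ r = true ∧ b = 0) ∨   -- (closed,opening) → (open,opening)
    (q = true ∧ a = 0 ∧ r = true ∧ b = 0) ∨    -- (open,opening) → (open,opening)
    (q = true ∧ a = 1 ∧ r = false ∧ b = 2) ∨   -- (open,entrance) → (closed,exit)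
    (q = true ∧ a = 1 ∧ r = true ∧ b = 0) ∨    -- (open,entrance) → (open,opening) leak
    (q = true ∧ a = 0 ∧ r = false ∧ b = 2)     -- (open,opening) → (closed,exit) leak


lemma legalEnd_append {Q L : Type} {G : Gadget Q L} {q r : Q} {A B : List (L × L)}
    (h : G.LegalEnd q (A ++ B) r) : ∃ m, G.LegalEnd q A m ∧ G.LegalEnd m B r := by
  induction A generalizing q with
  | nil => exact ⟨q, .nil q, h⟩
  | cons p A ih =>
    cases h with
    | cons ht htail =>
      obtain ⟨m, h1, h2⟩ := ih htail
      exact ⟨m, .cons ht h1, h2⟩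

lemma leaky_count_aux {X : List (Fin 3 × Fin 3)} {q r : Bool}
    (h : LeakyDoor.LegalEnd q X r)
    (hX : ∀ p ∈ X, p.1 = (1 : Fin 3) ∨ p = ((0 : Fin 3), (0 : Fin 3))) :
    X.count ((1 : Fin 3), (2 : Fin 3)) + r.toNat ≤
      X.count ((0 : Fin 3), (0 : Fin 3)) + q.toNat := by
  induction h with
  | nil q => simp
  | @cons q q' r a b X ht htail ih =>
    have hhd := hX (a, b) (by simp)
    have ih' := ih (fun p hp => hX p (List.mem_cons_of_mem _ hp))
    rcases ht with ⟨hq, ha, hr, hb⟩ | ⟨hq, ha, hr, hb⟩ | ⟨hq, ha, hr, hb⟩ |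
      ⟨hq, ha, hr, hb⟩ | ⟨hq, ha, hr, hb⟩
    · subst hq; subst ha; subst hr; subst hb
      rw [List.count_cons_of_ne (by decide), List.count_cons_self]
      simp only [Bool.toNat_true, Bool.toNat_false] at *
      omega
    · subst hq; subst ha; subst hr; subst hb
      rw [List.count_cons_of_ne (by decide), List.count_cons_self]
      simp only [Bool.toNat_true, Bool.toNat_false] at *
      omega
    · subst hq; subst ha; subst hr; subst hb
      rw [List.count_cons_self, List.count_cons_of_ne (by decide)]
      simp only [Bool.toNat_true, Bool.toNat_false] at *
      omega
    · subst hq; subst ha; subst hr; subst hb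
      rw [List.count_cons_of_ne (by decide), List.count_cons_of_ne (by decide)]
      simp only [Bool.toNat_true, Bool.toNat_false] at *
      omega
    · subst ha; subst hb
      exact absurd hhd (by decide)

theorem leakyDoor_openings_bound (X : List (Fin 3 × Fin 3))
    (h : LeakyDoor.Legal false X)
    (hX : ∀ p ∈ X, p.1 = (1 : Fin 3) ∨ p = ((0 : Fin 3), (0 : Fin 3))) :
    X.count ((1 : Fin 3), (2 : Fin 3)) ≤ X.count ((0 : Fin 3), (0 : Fin 3)) ∧
    ∀ i (hi : i < X.length), X[i]'hi = ((1 : Fin 3), (2 : Fin 3)) →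
      (X.take i).count ((1 : Fin 3), (2 : Fin 3)) <
        (X.take i).count ((0 : Fin 3), (0 : Fin 3)) := by
  obtain ⟨r, hend⟩ := h
  constructor
  · have := leaky_count_aux hend hX
    simp only [Bool.toNat_false] at this
    omega
  · intro i hi hXi
    have hsplit : X = X.take i ++ X[i] :: X.drop (i + 1) := by
      rw [List.getElem_cons_drop]; simp
    rw [hXi] at hsplit
    rw [hsplit] at hend
    obtain ⟨m, h1, h2⟩ := legalEnd_append hend
    have hm : m = true := by
      cases h2 with
      | cons ht _ =>
        rcases ht with ⟨hq, ha, hr, hb⟩ | ⟨hq, ha, hr, hb⟩ | ⟨hq, ha, hr, hb⟩ |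
          ⟨hq, ha, hr, hb⟩ | ⟨hq, ha, hr, hb⟩
        · exact absurd ha (by decide)
        · exact hq
        · exact hq
        · exact hq
        · exact absurd ha (by decide)
    have hXt : ∀ p ∈ X.take i, p.1 = (1 : Fin 3) ∨ p = ((0 : Fin 3), (0 : Fin 3)) :=
      fun p hp => hX p (List.mem_of_mem_take hp)
    have := leaky_count_aux h1 hXt
    rw [hm] at this
    simp only [Bool.toNat_true, Bool.toNat_false] at this
    omega
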